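/- For a single real variable, if f : ℝ → ℝ is real-analytic near a critical point x₀ that is not locally constant, with f vanishing to order m ≥ 2 at x₀, then the Łojasiewicz gradient inequality |f(y) − f(x₀)|^θ ≤ C|f′(y)| holds near x₀ with exponent θ = 1 − 1/m. -/

import Mathlib

/-!
Near `x₀` write `f y - f x₀ = (y - x₀) ^ m • g y` and `f' y = (y - x₀) ^ (m - 1) • h y` with `g`, `h`
analytic and `h x₀ ≠ 0`: differentiation lowers the analytic order of a zero by exactly one. Since
`m * (1 - 1 / m) = m - 1`, the power `(y - x₀) ^ (m - 1)` cancels, and `‖f y - f x₀‖ ^ (1 - 1 / m)`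
is bounded by `‖f' y‖` times `‖g‖ ^ (1 - 1 / m) / ‖h‖`, which stays bounded near `x₀`.
-/

open Filter Topology Asymptotics

theorem Filter.Tendsto.isBigO_of_tendsto_ne_zero {α E F : Type*} [NormedAddCommGroup E]
    [NormedAddCommGroup F] {l : Filter α} {u : α → E} {v : α → F} {a : E} {b : F}
    (hu : Tendsto u l (𝓝 a)) (hv : Tendsto v l (𝓝 b)) (hb : b ≠ 0) : u =O[l] v := by
  refine (hu.isBigO_one ℝ).trans ((isBigO_const_left_iff_pos_le_norm one_ne_zero).2 ?_)
  have hb' : 0 < ‖b‖ := norm_pos_iff.2 hb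
  exact ⟨‖b‖ / 2, by positivity, hv.norm.eventually_const_le (by linarith)⟩

theorem Real.pow_succ_rpow_one_sub_one_div {a : ℝ} (ha : 0 ≤ a) (n : ℕ) :
    (a ^ (n + 1)) ^ (1 - 1 / ((n + 1 : ℕ) : ℝ)) = a ^ n := by
  rw [← Real.rpow_natCast, ← Real.rpow_mul ha, ← Real.rpow_natCast]
  congr 1
  push_cast
  field_simp
  ring

theorem iteratedDeriv_sub_const {𝕜 E : Type*} [NontriviallyNormedField 𝕜] [NormedAddCommGroup E]
    [NormedSpace 𝕜 E] {n : ℕ} (hn : 0 < n) (f : 𝕜 → E) (c : E) :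
    iteratedDeriv n (fun z => f z - c) = iteratedDeriv n f := by
  obtain ⟨k, rfl⟩ := Nat.exists_eq_add_of_lt hn
  simp only [zero_add, iteratedDeriv_succ', deriv_sub_const_fun]

section

variable {𝕜 E : Type*} [NontriviallyNormedField 𝕜] [CharZero 𝕜] [NormedAddCommGroup E]
  [NormedSpace 𝕜 E] [CompleteSpace E] {f : 𝕜 → E} {x₀ : 𝕜}

theorem AnalyticAt.analyticOrderAt_sub_eq_of_iteratedDeriv (hf : AnalyticAt 𝕜 f x₀) {m : ℕ}
    (hm : 0 < m) (hvanish : ∀ k, 0 < k → k < m → iteratedDeriv k f x₀ = 0)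
    (hnonzero : iteratedDeriv m f x₀ ≠ 0) :
    analyticOrderAt (f · - f x₀) x₀ = m := by
  rw [analyticOrderAt_eq_nat_iff_iteratedDeriv_eq_zero (hf.fun_sub analyticAt_const),
    iteratedDeriv_sub_const hm]
  refine ⟨fun k hk => ?_, hnonzero⟩
  rcases k.eq_zero_or_pos with rfl | hk₀
  · simp
  · rw [iteratedDeriv_sub_const hk₀]
    exact hvanish k hk₀ hk

theorem AnalyticAt.norm_sub_rpow_isBigO_deriv (hf : AnalyticAt 𝕜 f x₀) {m : ℕ}
    (hord : analyticOrderAt (f · - f x₀) x₀ = m) :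
    (fun y => ‖f y - f x₀‖ ^ (1 - 1 / m : ℝ)) =O[𝓝 x₀] deriv f := by
  have hF : AnalyticAt 𝕜 (f · - f x₀) x₀ := hf.sub analyticAt_const
  obtain ⟨n, rfl⟩ : ∃ n, m = n + 1 := Nat.exists_eq_succ_of_ne_zero <| by
    rintro rfl
    exact hF.analyticOrderAt_ne_zero.2 (sub_self _) (mod_cast hord)
  have hderiv : analyticOrderAt (deriv f) x₀ = n := by
    rw [← deriv_sub_const_fun (f x₀), ← analyticOrderAt_deriv_eq_iff hF (sub_self _)]
    exact_mod_cast hord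
  obtain ⟨g, hg, -, hFg⟩ := hF.analyticOrderAt_eq_natCast.1 hord
  obtain ⟨h, hh, hh₀, hfh⟩ := hf.deriv.analyticOrderAt_eq_natCast.1 hderiv
  have hθ : (0 : ℝ) ≤ 1 - 1 / ((n + 1 : ℕ) : ℝ) :=
    sub_nonneg.2 <| div_le_one_of_le₀ (by simp) (by positivity)
  have hgh : (fun y => ‖g y‖ ^ (1 - 1 / ((n + 1 : ℕ) : ℝ))) =O[𝓝 x₀] fun y => ‖h y‖ :=
    (hg.continuousAt.norm.rpow_const (.inr hθ)).tendsto.isBigO_of_tendsto_ne_zero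
      hh.continuousAt.norm.tendsto (norm_ne_zero_iff.2 hh₀)
  refine isBigO_norm_right.1 <| ((isBigO_refl (fun y => ‖y - x₀‖ ^ n) _).mul hgh).congr' ?_ ?_
  · filter_upwards [hFg] with y hy
    rw [hy, norm_smul, norm_pow, Real.mul_rpow (by positivity) (norm_nonneg _),
      Real.pow_succ_rpow_one_sub_one_div (norm_nonneg _)]
  · filter_upwards [hfh] with y hy
    rw [hy, norm_smul, norm_pow]

end

theorem lojasiewicz_one_dim_exponent_general
    (f : ℝ → ℝ) (x₀ : ℝ) (hf : AnalyticAt ℝ f x₀)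
    (m : ℕ) (hm : 2 ≤ m)
    (hvanish : ∀ k, 0 < k → k < m → iteratedDeriv k f x₀ = 0)
    (hnonzero : iteratedDeriv m f x₀ ≠ 0) :
    ∃ C > (0:ℝ), ∃ V ∈ nhds x₀,
      ∀ y ∈ V, |f y - f x₀| ^ ((1 : ℝ) - 1 / m) ≤ C * |deriv f y| := by
  have horder := hf.analyticOrderAt_sub_eq_of_iteratedDeriv (by omega) hvanish hnonzero
  obtain ⟨C, hC, hbound⟩ := (hf.norm_sub_rpow_isBigO_deriv horder).exists_pos
  refine ⟨C, hC, _, hbound.bound, fun y hy => ?_⟩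
  simpa only [Set.mem_ofPred_eq, Real.norm_eq_abs,
    abs_of_nonneg (Real.rpow_nonneg (abs_nonneg _) _)] using hy

/-- One-variable Łojasiewicz gradient inequality with explicit exponent θ = 1 - 1/m,
where m ≥ 2 is the order of vanishing of f - f(x₀) at the critical point x₀. -/
theorem lojasiewicz_one_dim_exponent
    (f : ℝ → ℝ) (x₀ : ℝ) (hf : AnalyticAt ℝ f x₀)
    (hcrit : deriv f x₀ = 0) (m : ℕ) (hm : 2 ≤ m)
    (hvanish : ∀ k, 0 < k → k < m → iteratedDeriv k f x₀ = 0)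
    (hnonzero : iteratedDeriv m f x₀ ≠ 0) :
    ∃ C > (0:ℝ), ∃ V ∈ nhds x₀,
      ∀ y ∈ V, |f y - f x₀| ^ ((1 : ℝ) - 1 / m) ≤ C * |deriv f y| :=
  lojasiewicz_one_dim_exponent_general f x₀ hf m hm hvanish hnonzero
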